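/- Let (S,n) be a regular local ring and (R,m) a Noetherian local ring. Suppose ξ : S → R is a local homomorphism of finite length, and ψ : S → S, φ : R → R are endomorphisms of finite length satisfying ξ ∘ ψ = φ ∘ ξ. Then the local entropy of φ is at most the local entropy of ψ: lim_{n→∞} (1/n)·log( length_R(R/φⁿ(m)R) ) ≤ lim_{n→∞} (1/n)·log( length_S(S/ψⁿ(n)S) ). -/

import Mathlib

/-! For an `𝔫`-primary ideal `I` of `S`, write `IR` for its extension along `ξ`. Then
`ℓ_R(R/IR) ≤ ℓ_S(S/I) · ℓ_R(R/𝔫R)`, by induction on `ℓ_S(S/I)`: adjoining to `I` an element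
`x ∉ I` with `𝔫x ⊆ I` lowers `ℓ_S(S/I)`, while `(I + xS)R / IR` is a quotient of `R/𝔫R`.
For `I = ψⁿ(𝔫)S` the extension is `φⁿ(𝔫R)R ⊆ φⁿ(𝔪)R`, so
`ℓ(R/φⁿ(𝔪)R) ≤ ℓ(S/ψⁿ(𝔫)S) · ℓ(R/𝔫R)`, and the finite constant `ℓ(R/𝔫R)` disappears after
taking logarithms and dividing by `n`. -/

open IsLocalRing

/-- The length of a module, defined as the Krull dimension of its lattice of submodules. -/
noncomputable def moduleLength (R M : Type*) [Ring R] [AddCommGroup M] [Module R M] : ℕ∞ :=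
  WithBot.unbotD 0 (Order.krullDim (Submodule R M))

/-- A Noetherian local ring is regular if its maximal ideal can be generated by
`dim S` elements, where `dim S` is the Krull dimension of `S`. -/
def IsRegularLocal (S : Type*) [CommRing S] [IsLocalRing S] [IsNoetherianRing S] : Prop :=
  ∃ s : Finset S, Ideal.span (s : Set S) = maximalIdeal S ∧
    (s.card : WithBot ℕ∞) = ringKrullDim S

lemma moduleLength_eq_length (R M : Type*) [Ring R] [AddCommGroup M] [Module R M] :
    moduleLength R M = Module.length R M := by
  rw [moduleLength, ← Module.coe_length, WithBot.unbotD_coe]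

namespace Module

variable {R M N P : Type*} [Ring R] [AddCommGroup M] [Module R M] [AddCommGroup N] [Module R N]
  [AddCommGroup P] [Module R P]

lemma length_le_add_of_exact {f : N →ₗ[R] M} {g : M →ₗ[R] P} (hg : Function.Surjective g)
    (H : Function.Exact f g) : length R M ≤ length R N + length R P := by
  rw [length_eq_add_of_exact (LinearMap.range f).subtype g (Submodule.subtype_injective _) hg
    fun y => by simpa using H y]
  gcongr
  exact length_le_of_surjective f.rangeRestrict f.surjective_rangeRestrict

lemma length_lt_of_surjective {g : M →ₗ[R] P} (hg : Function.Surjective g)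
    (hker : LinearMap.ker g ≠ ⊥) (hM : length R M ≠ ⊤) : length R P < length R M := by
  rw [length_eq_add_of_exact _ g (Submodule.subtype_injective _) hg
    (LinearMap.exact_subtype_ker_map g)] at hM ⊢
  have : Nontrivial (LinearMap.ker g) := Submodule.nontrivial_iff_ne_bot.mpr hker
  exact ENat.lt_add_left (WithTop.add_ne_top.mp hM).2 length_pos

end Module

namespace Submodule

variable {R M : Type*} [Ring R] [AddCommGroup M] [Module R M] {p q : Submodule R M}

lemma length_quotient_le_of_le (h : p ≤ q) :
    Module.length R (M ⧸ q) ≤ Module.length R (M ⧸ p) :=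
  Module.length_le_of_surjective (factor h) (factor_surjective h)

lemma length_quotient_lt_of_lt (h : p < q) (hp : Module.length R (M ⧸ p) ≠ ⊤) :
    Module.length R (M ⧸ q) < Module.length R (M ⧸ p) := by
  refine Module.length_lt_of_surjective (factor_surjective h.le) ?_ hp
  obtain ⟨x, hxq, hxp⟩ := SetLike.exists_of_lt h
  refine (Submodule.ne_bot_iff _).mpr ⟨mkQ p x, ?_, ?_⟩
  · simpa [LinearMap.mem_ker] using hxq
  · simpa using hxp

end Submodule

namespace Ideal

variable {R : Type*} [CommRing R]

lemma length_quotient_le_add_of_mul_span_singleton_le {K A : Ideal R} {y : R}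
    (h : K * span {y} ≤ A) :
    Module.length R (R ⧸ A)
      ≤ Module.length R (R ⧸ K) + Module.length R (R ⧸ (A ⊔ span {y})) := by
  refine Module.length_le_add_of_exact (f := Submodule.mapQ K A (LinearMap.mulRight R y)
    fun s hs => h (mul_mem_mul hs (mem_span_singleton_self y)))
    (Submodule.factor_surjective le_sup_left) fun z => ?_
  induction z using Submodule.Quotient.induction_on with | _ r => ?_
  rw [Submodule.factor, Submodule.mapQ_apply, LinearMap.id_apply, Submodule.Quotient.mk_eq_zero,
    sup_comm, mem_span_singleton_sup]
  constructor
  · rintro ⟨c, a, ha, rfl⟩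
    refine ⟨Submodule.Quotient.mk c, (Submodule.Quotient.eq _).mpr ?_⟩
    simpa using ha
  · rintro ⟨c, hc⟩
    induction c using Submodule.Quotient.induction_on with | _ c => ?_
    refine ⟨c, r - c * y, ?_, by ring⟩
    simpa using (Submodule.Quotient.eq A).mp hc.symm

lemma exists_notMem_mul_span_singleton_le {m I : Ideal R} {k : ℕ} (hk : m ^ k ≤ I) (hI : I ≠ ⊤) :
    ∃ x ∉ I, m * span {x} ≤ I := by
  induction k with
  | zero => exact absurd (top_le_iff.mp (by simpa using hk)) hI
  | succ k ih =>
    by_cases hk' : m ^ k ≤ I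
    · exact ih hk'
    obtain ⟨x, hxm, hxI⟩ := SetLike.not_le_iff_exists.mp hk'
    refine ⟨x, hxI, le_trans ?_ hk⟩
    rw [pow_succ']
    exact mul_mono_right ((span_singleton_le_iff_mem _).mpr hxm)

lemma le_radical_map_pow {f : R →+* R} {I : Ideal R} (h : I ≤ (I.map f).radical) (n : ℕ) :
    I ≤ (I.map (f ^ n)).radical := by
  induction n with
  | zero => simpa [RingHom.one_def] using le_radical
  | succ n ih =>
    calc I ≤ (I.map (f ^ n)).radical := ih
      _ ≤ (((I.map f).radical).map (f ^ n)).radical := radical_mono (map_mono h)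
      _ ≤ ((I.map f).map (f ^ n)).radical := by
        simpa using radical_mono (map_radical_le (f ^ n) (I := I.map f))
      _ = (I.map (f ^ (n + 1))).radical := by rw [map_map, pow_succ, RingHom.mul_def]

end Ideal

namespace IsLocalRing

variable {S R : Type*} [CommRing S] [CommRing R] [IsNoetherianRing S] [IsLocalRing S]

lemma length_quotient_ne_top_of_le_radical {I : Ideal S} (hI : maximalIdeal S ≤ I.radical) :
    Module.length S (S ⧸ I) ≠ ⊤ := by
  by_cases htop : I = ⊤
  · simp [htop]
  have hrad : I.radical = maximalIdeal S :=
    le_antisymm (le_maximalIdeal (Ideal.radical_eq_top.not.mpr htop)) hI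
  have hmin : maximalIdeal S ∈ I.minimalPrimes := by
    rw [← Ideal.radical_minimalPrimes, hrad, Ideal.minimalPrimes_eq_subsingleton_self]
    rfl
  have := quotient_artinian_of_mem_minimalPrimes_of_isLocalRing I hmin
  have : IsArtinian S (S ⧸ I) :=
    isArtinian_of_surjective_algebraMap (Ideal.Quotient.mk_surjective (I := I))
  exact Module.length_ne_top

theorem length_quotient_map_le_mul (ξ : S →+* R) {I : Ideal S} (hI : maximalIdeal S ≤ I.radical) :
    Module.length R (R ⧸ I.map ξ)
      ≤ Module.length S (S ⧸ I) * Module.length R (R ⧸ (maximalIdeal S).map ξ) := by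
  obtain ⟨l, hl⟩ := ENat.ne_top_iff_exists.mp (length_quotient_ne_top_of_le_radical hI)
  induction l using Nat.strong_induction_on generalizing I with | _ l ih => ?_
  by_cases htop : I = ⊤
  · simp [htop, Ideal.map_top]
  obtain ⟨k, hk⟩ := Ideal.exists_pow_le_of_le_radical_of_fg hI (IsNoetherian.noetherian _)
  obtain ⟨x, hxI, hx⟩ := Ideal.exists_notMem_mul_span_singleton_le hk htop
  set J := I ⊔ Ideal.span {x}
  have hIJ : I < J := lt_of_le_of_ne le_sup_left fun h =>
    hxI (h ▸ Ideal.mem_sup_right (Ideal.mem_span_singleton_self x))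
  have hll' := Submodule.length_quotient_lt_of_lt hIJ (hl ▸ ENat.natCast_ne_top l)
  obtain ⟨l', hl'⟩ := ENat.ne_top_iff_exists.mp hll'.ne_top
  rw [← hl, ← hl', Nat.cast_lt] at hll'
  have hJ := ih l' hll' (hI.trans (Ideal.radical_mono le_sup_left)) hl'
  have hstep := Ideal.length_quotient_le_add_of_mul_span_singleton_le (A := I.map ξ) (y := ξ x)
    (K := (maximalIdeal S).map ξ) (by
      rw [← Set.image_singleton, ← Ideal.map_span, ← Ideal.map_mul]
      exact Ideal.map_mono hx)
  rw [← Set.image_singleton, ← Ideal.map_span, ← Ideal.map_sup] at hstep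
  calc Module.length R (R ⧸ I.map ξ)
      ≤ Module.length R (R ⧸ (maximalIdeal S).map ξ)
          + l' * Module.length R (R ⧸ (maximalIdeal S).map ξ) :=
        hstep.trans (add_le_add_right (hl' ▸ hJ) _)
    _ = (l' + 1 : ℕ) * Module.length R (R ⧸ (maximalIdeal S).map ξ) := by push_cast; ring
    _ ≤ Module.length S (S ⧸ I) * Module.length R (R ⧸ (maximalIdeal S).map ξ) := by
        rw [← hl]; gcongr; exact_mod_cast hll'

lemma length_quotient_map_pow_le_mul (ξ : S →+* R) {ψ : S →+* S} {φ : R →+* R}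
    (hcomm : ξ.comp ψ = φ.comp ξ) (hψ : maximalIdeal S ≤ ((maximalIdeal S).map ψ).radical)
    {𝔪 : Ideal R} (hξ : (maximalIdeal S).map ξ ≤ 𝔪) (n : ℕ) :
    Module.length R (R ⧸ 𝔪.map (φ ^ n)) ≤ Module.length S (S ⧸ (maximalIdeal S).map (ψ ^ n))
      * Module.length R (R ⧸ (maximalIdeal S).map ξ) := by
  have hcomm_pow : ξ.comp (ψ ^ n) = (φ ^ n).comp ξ := by
    have hsemiconj : Function.Semiconj ξ ψ φ := fun x => congr($hcomm x)
    ext x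
    simpa [RingHom.coe_pow] using hsemiconj.iterate_right n x
  calc Module.length R (R ⧸ 𝔪.map (φ ^ n))
      ≤ Module.length R (R ⧸ ((maximalIdeal S).map (ψ ^ n)).map ξ) := by
        refine Submodule.length_quotient_le_of_le ?_
        rw [Ideal.map_map, hcomm_pow, ← Ideal.map_map]
        exact Ideal.map_mono hξ
    _ ≤ _ := length_quotient_map_le_mul ξ (Ideal.le_radical_map_pow hψ n)

end IsLocalRing

lemma Real.log_natCast_le_add_of_le_mul {l m c : ℕ} (h : l ≤ m * c) :
    Real.log l ≤ Real.log m + Real.log c := by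
  rcases Nat.eq_zero_or_pos l with rfl | hl
  · simpa using add_nonneg (Real.log_natCast_nonneg m) (Real.log_natCast_nonneg c)
  have hm : m ≠ 0 := by rintro rfl; simp at h; omega
  have hc : c ≠ 0 := by rintro rfl; simp at h; omega
  rw [← Real.log_mul (by exact_mod_cast hm) (by exact_mod_cast hc)]
  exact Real.log_le_log (by exact_mod_cast hl) (by exact_mod_cast h)

theorem local_entropy_le_of_intertwined_general {S R : Type*} [CommRing S] [CommRing R]
    [IsNoetherianRing S] [IsNoetherianRing R] [IsLocalRing S] [IsLocalRing R]
    (ξ : S →+* R)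
    (hξ : (Ideal.map ξ (maximalIdeal S)).radical = maximalIdeal R)
    (ψ : S →+* S)
    (hψ : (Ideal.map ψ (maximalIdeal S)).radical = maximalIdeal S)
    (φ : R →+* R)
    (hcomm : ξ.comp ψ = φ.comp ξ)
    (a b : ℝ)
    (ha : Filter.Tendsto
      (fun n : ℕ => (1 / n : ℝ) *
        Real.log ((moduleLength R (R ⧸ Ideal.map (φ ^ n) (maximalIdeal R))).toNat))
      Filter.atTop (nhds a))
    (hb : Filter.Tendsto
      (fun n : ℕ => (1 / n : ℝ) *
        Real.log ((moduleLength S (S ⧸ Ideal.map (ψ ^ n) (maximalIdeal S))).toNat))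
      Filter.atTop (nhds b)) :
    a ≤ b := by
  set c := (Module.length R (R ⧸ (maximalIdeal S).map ξ)).toNat
  have hbound (n : ℕ) : (moduleLength R (R ⧸ (maximalIdeal R).map (φ ^ n))).toNat
      ≤ (moduleLength S (S ⧸ (maximalIdeal S).map (ψ ^ n))).toNat * c := by
    rw [moduleLength_eq_length, moduleLength_eq_length, ← ENat.toNat_mul]
    refine ENat.toNat_le_toNat (length_quotient_map_pow_le_mul ξ hcomm hψ.ge
      (hξ ▸ Ideal.le_radical) n) (WithTop.mul_ne_top ?_ ?_)
    · exact length_quotient_ne_top_of_le_radical (Ideal.le_radical_map_pow hψ.ge n)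
    · exact length_quotient_ne_top_of_le_radical hξ.ge
  have hb' : Filter.Tendsto (fun n : ℕ => (1 / n : ℝ) *
      (Real.log ((moduleLength S (S ⧸ (maximalIdeal S).map (ψ ^ n))).toNat) + Real.log c))
      Filter.atTop (nhds b) := by
    simpa [mul_add] using hb.add (tendsto_one_div_atTop_nhds_zero_nat.mul_const (Real.log c))
  exact le_of_tendsto_of_tendsto' ha hb' fun n =>
    mul_le_mul_of_nonneg_left (Real.log_natCast_le_add_of_le_mul (hbound n)) (by positivity)

/-- Let `(S,n)` be a regular local ring, `(R,m)` a Noetherian local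
ring, `ξ : S → R` a local homomorphism of finite length, and `ψ : S → S`, `φ : R → R`
endomorphisms of finite length with `ξ ∘ ψ = φ ∘ ξ`. Then the local entropy of `φ` is at
most the local entropy of `ψ`. -/
theorem local_entropy_le_of_intertwined {S R : Type*} [CommRing S] [CommRing R]
    [IsNoetherianRing S] [IsNoetherianRing R] [IsLocalRing S] [IsLocalRing R]
    (hreg : IsRegularLocal S)
    (ξ : S →+* R) [IsLocalHom ξ]
    (hξ : (Ideal.map ξ (maximalIdeal S)).radical = maximalIdeal R)
    (ψ : S →+* S) [IsLocalHom ψ]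
    (hψ : (Ideal.map ψ (maximalIdeal S)).radical = maximalIdeal S)
    (φ : R →+* R) [IsLocalHom φ]
    (hφ : (Ideal.map φ (maximalIdeal R)).radical = maximalIdeal R)
    (hcomm : ξ.comp ψ = φ.comp ξ)
    (a b : ℝ)
    (ha : Filter.Tendsto
      (fun n : ℕ => (1 / n : ℝ) *
        Real.log ((moduleLength R (R ⧸ Ideal.map (φ ^ n) (maximalIdeal R))).toNat))
      Filter.atTop (nhds a))
    (hb : Filter.Tendsto
      (fun n : ℕ => (1 / n : ℝ) *
        Real.log ((moduleLength S (S ⧸ Ideal.map (ψ ^ n) (maximalIdeal S))).toNat))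
      Filter.atTop (nhds b)) :
    a ≤ b :=
  local_entropy_le_of_intertwined_general ξ hξ ψ hψ φ hcomm a b ha hb
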